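/- arXiv:math/0311442 — 2 statements merged into one kernel-verified Lean document; each statement's English description precedes it below -/
import Mathlib

section
/- Let A be an associative unital k-algebra and let x, y, z ∈ A be k-linearly independent elements. Suppose x·y = y·x + p·1 for some nonzero integer p (viewed in k via ℤ → k). Then: (1) if x·z = z·x + m·1 for some integer m, and z·y = μ·y·z for some μ ∈ k∖{0}, then μ = 1 (so y and z commute); (2) if x·z = λ·z·x for some λ ∈ k∖{0,1}, and y·z = μ·z·y for some μ ∈ k∖{0}, then λ·μ = 1, i.e. y·z = λ^{-1}·z·y. -/
universe u

/-- In an associative unital `k`-algebra (`char k = 0`), if `x, y, z` are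
`k`-linearly independent, and `x·y = y·x + p·1` with `p` a nonzero integer, then:
(1) if `x·z = z·x + m·1` (`m ∈ ℤ`) and `z·y = μ·y·z` with `μ ≠ 0`, then `μ = 1`;
(2) if `x·z = λ·z·x` with `λ ∉ {0,1}` and `y·z = μ·z·y` with `μ ≠ 0`, then `λ·μ = 1`. -/
theorem stmt0 {k : Type u} [Field k] [CharZero k] {A : Type u} [Ring A] [Algebra k A]
    (x y z : A) (hli : LinearIndependent k ![x, y, z])
    (p : ℤ) (hp : p ≠ 0) (hxy : x * y = y * x + algebraMap k A (p : k)) :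
    (∀ (m : ℤ) (μ : k), μ ≠ 0 → x * z = z * x + algebraMap k A (m : k) →
        z * y = algebraMap k A μ * (y * z) → μ = 1) ∧
    (∀ (l μ : k), l ≠ 0 → l ≠ 1 → μ ≠ 0 → x * z = algebraMap k A l * (z * x) →
        y * z = algebraMap k A μ * (z * y) → l * μ = 1) := by
  have hpk : ((p : k)) ≠ 0 := Int.cast_ne_zero.mpr hp
  have hind := Fintype.linearIndependent_iff.mp hli
  constructor
  · intro m μ hμ hxz hzy
    set Pp := algebraMap k A (p : k) with hPp
    set Pm := algebraMap k A (m : k) with hPm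
    set Pμ := algebraMap k A μ with hPμ
    have e1 : x * (z * y) = Pμ * ((y * z) * x) + Pp * z + Pm * y := by
      calc x * (z * y) = (x * z) * y := (mul_assoc _ _ _).symm
        _ = (z * x + Pm) * y := by rw [hxz]
        _ = z * (x * y) + Pm * y := by noncomm_ring
        _ = z * (y * x + Pp) + Pm * y := by rw [hxy]
        _ = (z * y) * x + z * Pp + Pm * y := by noncomm_ring
        _ = (Pμ * (y * z)) * x + Pp * z + Pm * y := by
              rw [hzy, ← Algebra.commutes (p : k) z]
        _ = Pμ * ((y * z) * x) + Pp * z + Pm * y := by rw [mul_assoc]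
    have e2 : x * (z * y) = Pμ * ((y * z) * x) + (μ * p) • z + (μ * m) • y := by
      calc x * (z * y) = x * (Pμ * (y * z)) := by rw [hzy]
        _ = Pμ * (x * (y * z)) := by
              rw [← mul_assoc, ← Algebra.commutes μ x, mul_assoc]
        _ = Pμ * ((x * y) * z) := by rw [mul_assoc]
        _ = Pμ * ((y * x + Pp) * z) := by rw [hxy]
        _ = Pμ * (y * (x * z)) + Pμ * (Pp * z) := by noncomm_ring
        _ = Pμ * (y * (z * x + Pm)) + Pμ * (Pp * z) := by rw [hxz]
        _ = Pμ * ((y * z) * x) + Pμ * (y * Pm) + Pμ * (Pp * z) := by noncomm_ring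
        _ = Pμ * ((y * z) * x) + (μ * m) • y + (μ * p) • z := by
              rw [show y * Pm = Pm * y from (Algebra.commutes _ _).symm]
              simp only [hPμ, hPm, hPp, Algebra.smul_def, map_mul, mul_assoc]
        _ = Pμ * ((y * z) * x) + (μ * p) • z + (μ * m) • y := by abel
    have e3 : Pp * z + Pm * y = (μ * p) • z + (μ * m) • y := by
      have h := e1.symm.trans e2
      rw [add_assoc, add_assoc] at h
      exact add_left_cancel h
    have e3' : ((m : k) - μ * m) • y + ((p : k) - μ * p) • z = 0 := by
      rw [sub_smul, sub_smul, sub_add_sub_comm, sub_eq_zero,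
        Algebra.smul_def, Algebra.smul_def]
      rw [add_comm ((μ * ↑m) • y) ((μ * ↑p) • z)]
      rw [add_comm (algebraMap k A (m:k) * y) (algebraMap k A (p:k) * z)]
      exact e3
    have key : ∑ i, (![0, (m : k) - μ * m, (p : k) - μ * p]) i • (![x, y, z]) i = 0 := by
      simpa only [Fin.sum_univ_three, Matrix.cons_val_zero, Matrix.cons_val_one,
        Matrix.head_cons, Matrix.cons_val_two, Matrix.tail_cons, zero_smul,
        zero_add] using e3'
    have h2 := hind _ key 2
    simp only [Matrix.cons_val_two, Matrix.tail_cons, Matrix.head_cons] at h2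
    have h3 : μ * (p : k) = 1 * (p : k) := by
      rw [one_mul]; exact (sub_eq_zero.mp h2).symm
    exact mul_right_cancel₀ hpk h3
  · intro l μ hl hl1 hμ hxz hyz
    set Pp := algebraMap k A (p : k) with hPp
    set Pl := algebraMap k A l with hPl
    set Pμ := algebraMap k A μ with hPμ
    have e1 : x * (y * z) = (Pl * Pμ) * ((z * y) * x) + Pp * z := by
      calc x * (y * z) = (x * y) * z := (mul_assoc _ _ _).symm
        _ = (y * x + Pp) * z := by rw [hxy]
        _ = y * (x * z) + Pp * z := by noncomm_ring
        _ = y * (Pl * (z * x)) + Pp * z := by rw [hxz]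
        _ = Pl * ((y * z) * x) + Pp * z := by
              rw [← mul_assoc, ← Algebra.commutes l y, mul_assoc, mul_assoc]
        _ = Pl * ((Pμ * (z * y)) * x) + Pp * z := by rw [hyz]
        _ = (Pl * Pμ) * ((z * y) * x) + Pp * z := by noncomm_ring
    have e2 : x * (y * z) = (Pl * Pμ) * ((z * y) * x) + (l * μ * p) • z := by
      calc x * (y * z) = x * (Pμ * (z * y)) := by rw [hyz]
        _ = Pμ * (x * (z * y)) := by
              rw [← mul_assoc, ← Algebra.commutes μ x, mul_assoc]
        _ = Pμ * ((x * z) * y) := by rw [mul_assoc]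
        _ = Pμ * ((Pl * (z * x)) * y) := by rw [hxz]
        _ = (Pμ * Pl) * (z * (x * y)) := by noncomm_ring
        _ = (Pμ * Pl) * (z * (y * x + Pp)) := by rw [hxy]
        _ = (Pμ * Pl) * ((z * y) * x) + (Pμ * Pl) * (z * Pp) := by noncomm_ring
        _ = (Pl * Pμ) * ((z * y) * x) + (l * μ * p) • z := by
              have hc : Pμ * Pl = Pl * Pμ := by
                rw [hPμ, hPl, ← map_mul, ← map_mul, mul_comm]
              rw [show z * Pp = Pp * z from (Algebra.commutes _ _).symm,
                Algebra.smul_def, map_mul, map_mul, ← hPl, ← hPμ, ← hPp, hc]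
              noncomm_ring
    have e3 : Pp * z = (l * μ * p) • z := by
      exact add_left_cancel (e1.symm.trans e2)
    have e3' : ((p : k) - l * μ * p) • z = 0 := by
      rw [sub_smul, sub_eq_zero, Algebra.smul_def]
      exact e3
    have key : ∑ i, (![0, 0, (p : k) - l * μ * p]) i • (![x, y, z]) i = 0 := by
      simpa only [Fin.sum_univ_three, Matrix.cons_val_zero, Matrix.cons_val_one,
        Matrix.head_cons, Matrix.cons_val_two, Matrix.tail_cons, zero_smul,
        zero_add] using e3'
    have h2 := hind _ key 2
    simp only [Matrix.cons_val_two, Matrix.tail_cons, Matrix.head_cons] at h2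
    have h3 : l * μ * (p : k) = 1 * (p : k) := by
      rw [one_mul]; exact (sub_eq_zero.mp h2).symm
    exact mul_right_cancel₀ hpk h3
end

section
/- Let r ≥ 1, let K = k(w_1,…,w_r) be the field of fractions of the polynomial ring k[w_1,…,w_r], fix an index i with 1 ≤ i ≤ r, and let σ_i be the k-algebra automorphism of K determined by σ_i(w_i) = w_i − 1 and σ_i(w_j) = w_j for all j ≠ i. If T ∈ K is nonzero and there exists α ∈ k∖{0} with σ_i(T) = α·T, then α = 1 and T belongs to the subfield k(w_1,…,w_{i−1},w_{i+1},…,w_r) of K generated by k together with the variables w_j for j ≠ i. -/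
/-!
Put `E = k(w_j : j ≠ i)` and `x = w_i`, so that `K = E(x)` with `x` transcendental over `E`,
`σ` fixes `E` and `σ x = x - 1`. Write `T = p(x)/q(x)` with `p, q ∈ E[X]`. Then `σ T = α T` is the
polynomial identity `p(X - 1) q(X) = α p(X) q(X - 1)`, and since shifting preserves leading
coefficients, `α = 1`. Now `T` is `σ`-invariant, so the roots of `p(Y) - T q(Y) ∈ K[Y]` are stable
under `σ`; it vanishes at `x`, hence at all `x - n`, so in characteristic zero it is the zero
polynomial and `T` is a quotient of coefficients of `p` and `q`.
-/

open Polynomial IntermediateField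

theorem Polynomial.eq_zero_of_forall_eval_sub_natCast_eq_zero {R : Type*} [CommRing R] [IsDomain R]
    [CharZero R] {P : R[X]} {x : R} (h : ∀ n : ℕ, P.eval (x - n) = 0) : P = 0 :=
  P.eq_zero_of_infinite_isRoot <| Set.infinite_of_injective_forall_mem
    (fun _ _ hmn => Nat.cast_injective (sub_right_injective hmn)) h

section Shift

variable {E K : Type*} [Field E] [Field K] [Algebra E K] {x T : K} (σ : K →ₐ[E] K)

theorem eq_one_of_shift_apply_eq_algebraMap_mul (hx : Transcendental E x) (hσ : σ x = x - 1)
    (hT : T ∈ E⟮x⟯) (hT0 : T ≠ 0) {c : E} (h : σ T = algebraMap E K c * T) : c = 1 := by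
  obtain ⟨p, q, rfl⟩ := (mem_adjoin_simple_iff E T).mp hT
  have hp : aeval x p ≠ 0 := fun h0 => hT0 (by simp [h0])
  have hq : aeval x q ≠ 0 := fun h0 => hT0 (by simp [h0])
  have hshift (f : E[X]) : σ (aeval x f) = aeval x (taylor (-1) f) := by
    rw [← aeval_algHom_apply, hσ, taylor_apply, aeval_comp]
    simp [sub_eq_add_neg]
  have hpoly : taylor (-1) p * q = C c * p * taylor (-1) q := by
    apply transcendental_iff_injective.mp hx
    have hσq : σ (aeval x q) ≠ 0 := (map_ne_zero σ).mpr hq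
    rw [map_div₀] at h
    field_simp at h
    simp only [map_mul, aeval_C, ← hshift]
    linear_combination h
  have hpq : p.leadingCoeff * q.leadingCoeff ≠ 0 := by
    simp only [ne_eq, mul_eq_zero, leadingCoeff_eq_zero, not_or]
    exact ⟨fun h0 => hp (by simp [h0]), fun h0 => hq (by simp [h0])⟩
  have hlc := congrArg leadingCoeff hpoly
  simp only [leadingCoeff_mul, leadingCoeff_taylor, leadingCoeff_C] at hlc
  exact (mul_eq_right₀ hpq).mp (by linear_combination hlc.symm)

theorem mem_bot_of_shift_apply_eq_self [CharZero K] (hσ : σ x = x - 1) (hT : T ∈ E⟮x⟯)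
    (hfix : σ T = T) : T ∈ (⊥ : IntermediateField E K) := by
  obtain ⟨p, q, hpq⟩ := (mem_adjoin_simple_iff E T).mp hT
  by_cases hq : aeval x q = 0
  · simp [hpq, hq]
  set P : K[X] := p.map (algebraMap E K) - C T * q.map (algebraMap E K)
  have hP (y : K) : P.eval y = aeval y p - T * aeval y q := by
    simp [P, eval_map_algebraMap]
  have hroot (n : ℕ) : P.eval (x - n) = 0 := by
    induction n with
    | zero => simp [hP, hpq, hq]
    | succ n ih =>
      have hσn : σ (x - n) = x - (n + 1 : ℕ) := by simp [hσ]; ring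
      rw [← hσn, hP, aeval_algHom_apply, aeval_algHom_apply, ← hfix, ← map_mul, ← map_sub,
        ← hP, ih, map_zero]
  have hlc : q.leadingCoeff ≠ 0 := leadingCoeff_ne_zero.mpr fun h0 => hq (by simp [h0])
  have hcoeff := congrArg (coeff · q.natDegree) (eq_zero_of_forall_eval_sub_natCast_eq_zero hroot)
  simp only [P, coeff_sub, coeff_map, coeff_C_mul, coeff_zero, sub_eq_zero] at hcoeff
  refine mem_bot.mpr ⟨p.coeff q.natDegree / q.leadingCoeff, ?_⟩
  rw [map_div₀, hcoeff]
  exact mul_div_cancel_right₀ T ((_root_.map_ne_zero _).mpr hlc)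

end Shift

theorem IsFractionRing.adjoin_image_algebraMap_eq_top {F A K : Type*} [Field F] [CommRing A]
    [Algebra F A] [Field K] [Algebra F K] [Algebra A K] [IsScalarTower F A K] [IsFractionRing A K]
    {s : Set A} (hs : Algebra.adjoin F s = ⊤) :
    adjoin F (algebraMap A K '' s) = ⊤ := by
  rw [← (AlgHom.fieldRange_eq_top (f := AlgHom.id F K)).mpr Function.surjective_id]
  refine (IsFractionRing.algHom_fieldRange_eq_of_comp_eq_of_range_eq
    (g := IsScalarTower.toAlgHom F A K) rfl ?_).symm
  rw [← Algebra.map_top, ← hs, AlgHom.map_adjoin]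
  rfl

theorem AlgEquiv.apply_eq_self_of_mem_adjoin {F L : Type*} [Field F] [Field L] [Algebra F L]
    (σ : L ≃ₐ[F] L) {s : Set L} (hs : ∀ y ∈ s, σ y = y) {y : L} (hy : y ∈ adjoin F s) :
    σ y = y := by
  induction hy using adjoin_induction with
  | mem y hy => exact hs y hy
  | algebraMap a => exact σ.commutes a
  | add a b _ _ ha hb => rw [map_add, ha, hb]
  | inv a _ ha => rw [map_inv₀, ha]
  | mul a b _ _ ha hb => rw [map_mul, ha, hb]

theorem stmt2_general {k : Type u} [Field k] [CharZero k] (r : ℕ) (i : Fin r)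
    (K : Type u) [Field K] [Algebra k K] [Algebra (MvPolynomial (Fin r) k) K]
    [IsScalarTower k (MvPolynomial (Fin r) k) K]
    [IsFractionRing (MvPolynomial (Fin r) k) K]
    (σ : K ≃ₐ[k] K)
    (hσi : σ (algebraMap (MvPolynomial (Fin r) k) K (MvPolynomial.X i)) =
      algebraMap (MvPolynomial (Fin r) k) K (MvPolynomial.X i) - 1)
    (hσj : ∀ j : Fin r, j ≠ i →
      σ (algebraMap (MvPolynomial (Fin r) k) K (MvPolynomial.X j)) =
        algebraMap (MvPolynomial (Fin r) k) K (MvPolynomial.X j))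
    (T : K) (hT : T ≠ 0) (α : k) (h : σ T = algebraMap k K α * T) :
    α = 1 ∧ T ∈ IntermediateField.adjoin k
      {w : K | ∃ j : Fin r, j ≠ i ∧
        w = algebraMap (MvPolynomial (Fin r) k) K (MvPolynomial.X j)} := by
  set v : Fin r → K := fun j => algebraMap (MvPolynomial (Fin r) k) K (MvPolynomial.X j)
  have hS : {w : K | ∃ j : Fin r, j ≠ i ∧ w = v j} = v '' {i}ᶜ := by
    ext; simp [eq_comm]
  rw [hS]
  set E := adjoin k (v '' {i}ᶜ)
  have hv : AlgebraicIndependent k v :=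
    (MvPolynomial.algebraicIndependent_X _ k).map' (f := IsScalarTower.toAlgHom k _ K)
      (IsFractionRing.injective _ K)
  have hx : Transcendental E (v i) :=
    transcendental_adjoin_iff.mpr (hv.transcendental_adjoin (by simp))
  have hgen : E⟮v i⟯ = ⊤ := by
    apply restrictScalars_injective k
    rw [adjoin_adjoin_left, restrictScalars_top, ← Set.image_singleton, ← Set.image_union,
      Set.compl_union_self, Set.image_univ,
      show Set.range v = _ '' Set.range MvPolynomial.X from Set.range_comp _ _]
    exact IsFractionRing.adjoin_image_algebraMap_eq_top (MvPolynomial.adjoin_range_X)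
  have hTgen : T ∈ E⟮v i⟯ := hgen ▸ mem_top
  let τ : K →ₐ[E] K :=
    { (σ : K →+* K) with
      commutes' := fun e => σ.apply_eq_self_of_mem_adjoin (by simpa using hσj) e.2 }
  have hα : α = 1 := (algebraMap k E).injective <| by
    rw [map_one]
    refine eq_one_of_shift_apply_eq_algebraMap_mul τ hx hσi hTgen hT ?_
    show σ T = _
    simpa [← IsScalarTower.algebraMap_apply] using h
  have : CharZero K := charZero_of_injective_algebraMap (algebraMap k K).injective
  obtain ⟨e, he⟩ := mem_bot.mp
    (mem_bot_of_shift_apply_eq_self τ hσi hTgen (show σ T = T by simpa [hα] using h))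
  exact ⟨hα, he ▸ e.2⟩

/-- Let `K = k(w_1,…,w_r)` be the fraction field of the polynomial ring
`k[w_1,…,w_r]` and let `σ` be the `k`-automorphism of `K` with `σ(w_i) = w_i - 1` and
`σ(w_j) = w_j` for `j ≠ i`. If `T ≠ 0` and `σ(T) = α·T` with `α ∈ k∖{0}`, then `α = 1`
and `T` lies in the subfield generated by `k` and the `w_j`, `j ≠ i`. -/
theorem stmt2 {k : Type u} [Field k] [CharZero k] (r : ℕ) (hr : 1 ≤ r) (i : Fin r)
    (K : Type u) [Field K] [Algebra k K] [Algebra (MvPolynomial (Fin r) k) K]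
    [IsScalarTower k (MvPolynomial (Fin r) k) K]
    [IsFractionRing (MvPolynomial (Fin r) k) K]
    (σ : K ≃ₐ[k] K)
    (hσi : σ (algebraMap (MvPolynomial (Fin r) k) K (MvPolynomial.X i)) =
      algebraMap (MvPolynomial (Fin r) k) K (MvPolynomial.X i) - 1)
    (hσj : ∀ j : Fin r, j ≠ i →
      σ (algebraMap (MvPolynomial (Fin r) k) K (MvPolynomial.X j)) =
        algebraMap (MvPolynomial (Fin r) k) K (MvPolynomial.X j))
    (T : K) (hT : T ≠ 0) (α : k) (hα : α ≠ 0) (h : σ T = algebraMap k K α * T) :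
    α = 1 ∧ T ∈ IntermediateField.adjoin k
      {w : K | ∃ j : Fin r, j ≠ i ∧
        w = algebraMap (MvPolynomial (Fin r) k) K (MvPolynomial.X j)} :=
  stmt2_general r i K σ hσi hσj T hT α h
end
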